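/- Operator Cauchy–Schwarz: for operators a₁,…,a_m ∈ B(K₁) and b₁,…,b_m ∈ B(K₂), one has ‖Σᵢ aᵢ ⊗ bᵢ‖_{B(K₁⊗K₂)} ≤ ‖Σᵢ aᵢ aᵢ*‖^{1/2}_{B(K₁)} · ‖Σᵢ bᵢ* bᵢ‖^{1/2}_{B(K₂)}. -/

import Mathlib

open scoped BigOperators Kronecker ComplexOrder Matrix

/-- The ℓ²→ℓ² operator norm of a square complex matrix. -/
noncomputable def opNorm {n : Type*} [Fintype n] [DecidableEq n] (A : Matrix n n ℂ) : ℝ :=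
  ‖Matrix.toEuclideanCLM (𝕜 := ℂ) A‖

/-- The square root of a positive semidefinite matrix, as `Matrix.PosSemidef.sqrt` was defined
in the older Mathlib (since removed). -/
noncomputable def Matrix.PosSemidef.sqrt {n : Type*} {𝕜 : Type*} [Fintype n] [RCLike 𝕜]
    [DecidableEq n] {A : Matrix n n 𝕜} (hA : A.PosSemidef) : Matrix n n 𝕜 :=
  hA.1.eigenvectorUnitary.1 * Matrix.diagonal ((↑) ∘ (√·) ∘ hA.1.eigenvalues) *
    (star hA.1.eigenvectorUnitary : Matrix n n 𝕜)

/-- The trace norm (Schatten-1 norm) of a square complex matrix. -/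
noncomputable def traceNorm {n : Type*} [Fintype n] [DecidableEq n] (A : Matrix n n ℂ) : ℝ :=
  ((Matrix.posSemidef_conjTranspose_mul_self A).sqrt.trace).re

/-!
Factor `∑ i, aᵢ ⊗ bᵢ = R * C`, where `R` is the block row `[a₁ ⊗ 1, …, aₘ ⊗ 1]` and `C` the block
column `[1 ⊗ b₁; …; 1 ⊗ bₘ]`. The C⋆-identity gives `‖R‖² = ‖R Rᴴ‖ = ‖(∑ i, aᵢ aᵢᴴ) ⊗ 1‖` and
`‖C‖² = ‖Cᴴ C‖ = ‖1 ⊗ ∑ i, bᵢᴴ bᵢ‖`, and tensoring with `1` is a star algebra homomorphism of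
C⋆-algebras, hence contractive.
-/

open Matrix
open scoped Matrix.Norms.L2Operator

namespace Matrix

section Kronecker

variable {R : Type*} [CommSemiring R] [StarRing R] (n p : Type*) [Fintype n] [Fintype p]
  [DecidableEq n] [DecidableEq p]

def kroneckerOneStarAlgHom : Matrix n n R →⋆ₐ[R] Matrix (n × p) (n × p) R where
  toFun A := A ⊗ₖ 1
  map_one' := one_kronecker_one
  map_mul' A B := by rw [← mul_kronecker_mul, mul_one]
  map_zero' := zero_kronecker _
  map_add' A B := add_kronecker A B 1
  commutes' r := by
    simp only [Algebra.algebraMap_eq_smul_one, smul_kronecker, one_kronecker_one]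
  map_star' A := by simp only [star_eq_conjTranspose, conjTranspose_kronecker, conjTranspose_one]

def oneKroneckerStarAlgHom : Matrix p p R →⋆ₐ[R] Matrix (n × p) (n × p) R where
  toFun B := 1 ⊗ₖ B
  map_one' := one_kronecker_one
  map_mul' A B := by rw [← mul_kronecker_mul, mul_one]
  map_zero' := kronecker_zero _
  map_add' A B := kronecker_add 1 A B
  commutes' r := by
    simp only [Algebra.algebraMap_eq_smul_one, kronecker_smul, one_kronecker_one]
  map_star' A := by simp only [star_eq_conjTranspose, conjTranspose_kronecker, conjTranspose_one]

end Kronecker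

section Norm

variable {n p : Type*} [Fintype n] [Fintype p] [DecidableEq n] [DecidableEq p]

theorem l2_opNorm_kronecker_one_le (A : Matrix n n ℂ) : ‖A ⊗ₖ (1 : Matrix p p ℂ)‖ ≤ ‖A‖ :=
  NonUnitalStarAlgHom.norm_apply_le (kroneckerOneStarAlgHom (R := ℂ) n p) A

theorem l2_opNorm_one_kronecker_le (B : Matrix p p ℂ) : ‖(1 : Matrix n n ℂ) ⊗ₖ B‖ ≤ ‖B‖ :=
  NonUnitalStarAlgHom.norm_apply_le (oneKroneckerStarAlgHom (R := ℂ) n p) B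

end Norm

def fromRowBlocks {ι l n R : Type*} (X : ι → Matrix l n R) : Matrix (ι × l) n R :=
  of (Function.uncurry X)

theorem conjTranspose_fromRowBlocks_mul_fromRowBlocks {ι l m n R : Type*} [Fintype ι] [Fintype l]
    [NonUnitalSemiring R] [StarRing R] (X : ι → Matrix l m R) (Y : ι → Matrix l n R) :
    (fromRowBlocks X)ᴴ * fromRowBlocks Y = ∑ i, (X i)ᴴ * Y i := by
  ext p q
  simp only [mul_apply, conjTranspose_apply, fromRowBlocks, of_apply, Fintype.sum_prod_type,
    sum_apply]
  rfl

theorem l2_opNorm_fromRowBlocks {𝕜 ι l n : Type*} [RCLike 𝕜] [Fintype ι] [Fintype l] [Fintype n]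
    [DecidableEq n] (X : ι → Matrix l n 𝕜) : ‖fromRowBlocks X‖ = √‖∑ i, (X i)ᴴ * X i‖ := by
  rw [← conjTranspose_fromRowBlocks_mul_fromRowBlocks, l2_opNorm_conjTranspose_mul_self,
    Real.sqrt_mul_self (norm_nonneg _)]

theorem l2_opNorm_sum_mul_le {𝕜 ι l m n : Type*} [RCLike 𝕜] [Fintype ι] [Fintype l] [Fintype m]
    [Fintype n] [DecidableEq m] [DecidableEq n] (X : ι → Matrix m l 𝕜) (Y : ι → Matrix l n 𝕜) :
    ‖∑ i, X i * Y i‖ ≤ √‖∑ i, X i * (X i)ᴴ‖ * √‖∑ i, (Y i)ᴴ * Y i‖ := by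
  classical
  have hfactor : ∑ i, X i * Y i = (fromRowBlocks fun i ↦ (X i)ᴴ)ᴴ * fromRowBlocks Y := by
    simp only [conjTranspose_fromRowBlocks_mul_fromRowBlocks, conjTranspose_conjTranspose]
  calc ‖∑ i, X i * Y i‖
      ≤ ‖fromRowBlocks fun i ↦ (X i)ᴴ‖ * ‖fromRowBlocks Y‖ := by
        rw [hfactor, ← l2_opNorm_conjTranspose (fromRowBlocks fun i ↦ (X i)ᴴ)]
        exact l2_opNorm_mul _ _
    _ = √‖∑ i, X i * (X i)ᴴ‖ * √‖∑ i, (Y i)ᴴ * Y i‖ := by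
        simp only [l2_opNorm_fromRowBlocks, conjTranspose_conjTranspose]

end Matrix

/-- operator Cauchy–Schwarz (the Haagerup tensor product inequality). -/
theorem operator_cauchy_schwarz {m k1 k2 : ℕ}
    (a : Fin m → Matrix (Fin k1) (Fin k1) ℂ) (b : Fin m → Matrix (Fin k2) (Fin k2) ℂ) :
    opNorm (∑ i, a i ⊗ₖ b i) ≤
      Real.sqrt (opNorm (∑ i, a i * (a i)ᴴ)) * Real.sqrt (opNorm (∑ i, (b i)ᴴ * b i)) := by
  have hprod (i : Fin m) : (a i ⊗ₖ 1) * (1 ⊗ₖ b i) = a i ⊗ₖ b i := by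
    rw [← mul_kronecker_mul, mul_one, one_mul]
  have haa : ∑ i, (a i ⊗ₖ 1) * (a i ⊗ₖ (1 : Matrix (Fin k2) (Fin k2) ℂ))ᴴ
      = (∑ i, a i * (a i)ᴴ) ⊗ₖ 1 := by
    simp only [conjTranspose_kronecker, conjTranspose_one, ← mul_kronecker_mul, mul_one]
    exact (map_sum (kroneckerOneStarAlgHom (R := ℂ) (Fin k1) (Fin k2)) _ _).symm
  have hbb : ∑ i, ((1 : Matrix (Fin k1) (Fin k1) ℂ) ⊗ₖ b i)ᴴ * (1 ⊗ₖ b i)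
      = 1 ⊗ₖ ∑ i, (b i)ᴴ * b i := by
    simp only [conjTranspose_kronecker, conjTranspose_one, ← mul_kronecker_mul, mul_one]
    exact (map_sum (oneKroneckerStarAlgHom (R := ℂ) (Fin k1) (Fin k2)) _ _).symm
  calc opNorm (∑ i, a i ⊗ₖ b i) = ‖∑ i, (a i ⊗ₖ 1) * (1 ⊗ₖ b i)‖ := by simp only [hprod]; rfl
    _ ≤ √‖∑ i, (a i ⊗ₖ 1) * (a i ⊗ₖ (1 : Matrix (Fin k2) (Fin k2) ℂ))ᴴ‖ *
          √‖∑ i, ((1 : Matrix (Fin k1) (Fin k1) ℂ) ⊗ₖ b i)ᴴ * (1 ⊗ₖ b i)‖ :=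
        l2_opNorm_sum_mul_le _ _
    _ ≤ √(opNorm (∑ i, a i * (a i)ᴴ)) * √(opNorm (∑ i, (b i)ᴴ * b i)) := by
        rw [haa, hbb]
        gcongr
        exacts [l2_opNorm_kronecker_one_le _, l2_opNorm_one_kronecker_le _]
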